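/- arXiv:1302.6496 — 6 statements merged into one kernel-verified Lean document; each statement's English description precedes it below -/
import Mathlib

section
/- For every natural number n ≥ 1 and every real ζ > 1, one has cosh²β · cosh²(γ − δ) = cosh²δ, where β, γ, δ are the unique nonnegative reals satisfying cosh²β = (nζ + 1)/(n + 1), cosh²γ = ((n + 1)ζ²)/(nζ + 1), and cosh²δ = ((n + 1)ζ + 1)/(n + 2). -/
/-!
Substituting `sinh² = cosh² - 1` shows `ζ² sinh² γ sinh² δ = (ζ - 1)² cosh² γ cosh² δ`; as both
products are nonnegative, `ζ sinh γ sinh δ = (ζ - 1) cosh γ cosh δ`, so the subtraction formula gives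
`cosh (γ - δ) = cosh γ cosh δ / ζ`. The claim then reduces to `cosh² β cosh² γ = ζ²`.
-/

open Real

theorem cosh_sub_sq_of_sinh_sq_mul_sinh_sq {γ δ t : ℝ} (hγ : 0 ≤ γ) (hδ : 0 ≤ δ) (ht : t ≤ 1)
    (h : sinh γ ^ 2 * sinh δ ^ 2 = (1 - t) ^ 2 * (cosh γ ^ 2 * cosh δ ^ 2)) :
    cosh (γ - δ) ^ 2 = t ^ 2 * (cosh γ ^ 2 * cosh δ ^ 2) := by
  have hsinh : sinh γ * sinh δ = (1 - t) * (cosh γ * cosh δ) := by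
    have hl : 0 ≤ sinh γ * sinh δ :=
      mul_nonneg (sinh_nonneg_iff.2 hγ) (sinh_nonneg_iff.2 hδ)
    have hr : 0 ≤ (1 - t) * (cosh γ * cosh δ) :=
      mul_nonneg (by linarith) (mul_nonneg (cosh_pos γ).le (cosh_pos δ).le)
    exact (pow_left_inj₀ hl hr two_ne_zero).1 (by linear_combination h)
  rw [cosh_sub, hsinh]
  ring

theorem stmt_0_general (n : ℕ) (ζ β γ δ : ℝ) (hζ : 1 < ζ)
    (hγ : 0 ≤ γ) (hδ : 0 ≤ δ)
    (h1 : Real.cosh β ^ 2 = ((n : ℝ) * ζ + 1) / ((n : ℝ) + 1))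
    (h2 : Real.cosh γ ^ 2 = (((n : ℝ) + 1) * ζ ^ 2) / ((n : ℝ) * ζ + 1))
    (h3 : Real.cosh δ ^ 2 = (((n : ℝ) + 1) * ζ + 1) / ((n : ℝ) + 2)) :
    Real.cosh β ^ 2 * Real.cosh (γ - δ) ^ 2 = Real.cosh δ ^ 2 := by
  have hζ0 : 0 < ζ := by linarith
  have hsinh : sinh γ ^ 2 * sinh δ ^ 2 = (1 - ζ⁻¹) ^ 2 * (cosh γ ^ 2 * cosh δ ^ 2) := by
    rw [sinh_sq, sinh_sq, h2, h3]
    field_simp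
    ring
  rw [cosh_sub_sq_of_sinh_sq_mul_sinh_sq hγ hδ (inv_le_one_of_one_le₀ hζ.le) hsinh, h1, h2]
  field_simp

theorem stmt_0 (n : ℕ) (hn : 1 ≤ n) (ζ β γ δ : ℝ) (hζ : 1 < ζ)
    (hβ : 0 ≤ β) (hγ : 0 ≤ γ) (hδ : 0 ≤ δ)
    (h1 : Real.cosh β ^ 2 = ((n : ℝ) * ζ + 1) / ((n : ℝ) + 1))
    (h2 : Real.cosh γ ^ 2 = (((n : ℝ) + 1) * ζ ^ 2) / ((n : ℝ) * ζ + 1))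
    (h3 : Real.cosh δ ^ 2 = (((n : ℝ) + 1) * ζ + 1) / ((n : ℝ) + 2)) :
    Real.cosh β ^ 2 * Real.cosh (γ - δ) ^ 2 = Real.cosh δ ^ 2 :=
  stmt_0_general n ζ β γ δ hζ hγ hδ h1 h2 h3
end

section
/- For every natural number n ≥ 1 and real ζ > 1, if γ, δ ≥ 0 satisfy cosh²γ = ((n+1)ζ²)/(nζ+1) and cosh²δ = ((n+1)ζ+1)/(n+2), then cosh²(γ − δ) = ((n + 1)(nζ + ζ + 1))/((nζ + 1)(n + 2)). -/
open Real

/-- As `sinh x, sinh y ≥ 0`, the cross term `cosh x cosh y sinh x sinh y` of `cosh (x - y) ^ 2`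
is the square root of its square, which involves `cosh` alone. -/
theorem Real.cosh_sub_sq_of_nonneg {x y : ℝ} (hx : 0 ≤ x) (hy : 0 ≤ y) :
    cosh (x - y) ^ 2 = cosh x ^ 2 * cosh y ^ 2 + (cosh x ^ 2 - 1) * (cosh y ^ 2 - 1)
      - 2 * √(cosh x ^ 2 * cosh y ^ 2 * ((cosh x ^ 2 - 1) * (cosh y ^ 2 - 1))) := by
  have hsx : 0 ≤ sinh x := sinh_nonneg_iff.2 hx
  have hsy : 0 ≤ sinh y := sinh_nonneg_iff.2 hy
  have hprod : √(cosh x ^ 2 * cosh y ^ 2 * ((cosh x ^ 2 - 1) * (cosh y ^ 2 - 1)))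
      = cosh x * cosh y * (sinh x * sinh y) := by
    have hnonneg : 0 ≤ cosh x * cosh y * (sinh x * sinh y) := by positivity
    rw [← sinh_sq x, ← sinh_sq y, ← sqrt_sq hnonneg]
    ring_nf
  rw [hprod, ← sinh_sq x, ← sinh_sq y, cosh_sub]
  ring

theorem stmt_4_general (n : ℕ) (ζ γ δ : ℝ) (hζ : 1 < ζ)
    (hγ : 0 ≤ γ) (hδ : 0 ≤ δ)
    (h2 : Real.cosh γ ^ 2 = (((n : ℝ) + 1) * ζ ^ 2) / ((n : ℝ) * ζ + 1))
    (h3 : Real.cosh δ ^ 2 = (((n : ℝ) + 1) * ζ + 1) / ((n : ℝ) + 2)) :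
    Real.cosh (γ - δ) ^ 2 =
      (((n : ℝ) + 1) * ((n : ℝ) * ζ + ζ + 1)) / (((n : ℝ) * ζ + 1) * ((n : ℝ) + 2)) := by
  have hζ₀ : 0 ≤ ζ - 1 := by linarith
  have hnζ : 0 < (n : ℝ) * ζ + 1 := by positivity
  set E := ((n : ℝ) + 1) * ζ * (ζ - 1) * (((n : ℝ) + 1) * ζ + 1)
    / (((n : ℝ) * ζ + 1) * ((n : ℝ) + 2)) with hE_def
  have hE : 0 ≤ E := by positivity
  have hsq : cosh γ ^ 2 * cosh δ ^ 2 * ((cosh γ ^ 2 - 1) * (cosh δ ^ 2 - 1)) = E ^ 2 := by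
    rw [h2, h3, hE_def]
    field_simp
    ring
  rw [cosh_sub_sq_of_nonneg hγ hδ, hsq, sqrt_sq hE, h2, h3, hE_def]
  field_simp
  ring

theorem stmt_4 (n : ℕ) (hn : 1 ≤ n) (ζ γ δ : ℝ) (hζ : 1 < ζ)
    (hγ : 0 ≤ γ) (hδ : 0 ≤ δ)
    (h2 : Real.cosh γ ^ 2 = (((n : ℝ) + 1) * ζ ^ 2) / ((n : ℝ) * ζ + 1))
    (h3 : Real.cosh δ ^ 2 = (((n : ℝ) + 1) * ζ + 1) / ((n : ℝ) + 2)) :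
    Real.cosh (γ - δ) ^ 2 =
      (((n : ℝ) + 1) * ((n : ℝ) * ζ + ζ + 1)) / (((n : ℝ) * ζ + 1) * ((n : ℝ) + 2)) :=
  stmt_4_general n ζ γ δ hζ hγ hδ h2 h3
end

section
/- For every natural number n ≥ 3 and real a > 0, there exist λ > 0 and a sequence α : {0,1,…,n+1} → ℝ such that α₀ = α_{n+1} = 0, α₁ = α_n = 1, α_j > 0 for all 1 < j < n, and for every 1 ≤ j ≤ n one has λ·α_j = α_{j−1} + α_{j+1} + 2/(n − 1 + 1/cosh a). -/
open Real Filter Set Topology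

/-!
The ansatz `α j = (cosh (s m) - cosh (s (j - m))) / A` with `m = (n + 1) / 2`, normalised by
`A = cosh (s m) - cosh (s (m - 1))`, is symmetric about `m`, vanishes at `0` and `n + 1` and is
positive in between; with `λ = 2 cosh s` the addition formula for `cosh` turns the recurrence
into the single equation `(2 cosh s - 2) cosh (s m) = c A` for the constant
`c = 2 / (n - 1 + 1 / cosh a)`. Writing `s = 2 t` it reduces to
`sinh ((n + 2) t) = (1 + c) sinh (n t)`. As `cosh a > 1` we have `c > 2 / n`, so at `t = 0`
the right side has the larger slope `(1 + c) n > n + 2`, while the left side wins at `t = 1`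
since `c < 1`; the intermediate value theorem gives a root `t > 0`.
-/

theorem exists_mem_Ioo_eq_zero_of_hasDerivAt_neg {f : ℝ → ℝ} {d x b : ℝ} (hf : Continuous f)
    (hfx : f x = 0) (hd : HasDerivAt f d x) (hd_neg : d < 0) (hxb : x < b) (hfb : 0 < f b) :
    ∃ t ∈ Ioo x b, f t = 0 := by
  have hslope : ∀ᶠ h in 𝓝[>] (0 : ℝ), h⁻¹ • (f (x + h) - f x) < 0 :=
    hd.tendsto_slope_zero_right.eventually_lt_const hd_neg
  have hsmall : ∀ᶠ h in 𝓝[>] (0 : ℝ), h < b - x :=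
    (eventually_lt_nhds (sub_pos.mpr hxb)).filter_mono nhdsWithin_le_nhds
  obtain ⟨h, hneg, hhb, hh⟩ := (hslope.and (hsmall.and self_mem_nhdsWithin)).exists
  have hfh : f (x + h) < 0 := by
    rw [hfx, sub_zero, smul_eq_mul] at hneg
    exact neg_of_mul_neg_right hneg (inv_pos.mpr hh).le
  obtain ⟨t, ht, hft⟩ := intermediate_value_Ioo (by linarith) hf.continuousOn ⟨hfh, hfb⟩
  exact ⟨t, ⟨by linarith [ht.1], ht.2⟩, hft⟩

theorem exists_pos_sinh_mul_add_two_eq {N c : ℝ} (hN : 0 < N) (hcN : 2 < c * N) (hc : c < 1) :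
    ∃ t, 0 < t ∧ sinh ((N + 2) * t) = (1 + c) * sinh (N * t) := by
  set f : ℝ → ℝ := fun t ↦ sinh ((N + 2) * t) - (1 + c) * sinh (N * t)
  have hsinh (k : ℝ) : HasDerivAt (fun t ↦ sinh (k * t)) k 0 := by
    simpa using ((hasDerivAt_id (0 : ℝ)).const_mul k).sinh
  have hd : HasDerivAt f ((N + 2) - (1 + c) * N) 0 :=
    (hsinh _).sub ((hsinh N).const_mul (1 + c))
  have hf1 : 0 < f 1 := by
    have hexp : 3 < exp 2 := by linarith [add_one_lt_exp (two_ne_zero (α := ℝ))]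
    have hsN : 0 < sinh N := sinh_pos_iff.mpr hN
    have hsplit : sinh (N + 2) = sinh N * cosh 2 + cosh N * sinh 2 := sinh_add N 2
    have h2 : 0 < sinh 2 := sinh_pos_iff.mpr two_pos
    simp only [f, mul_one]
    nlinarith [sinh_lt_cosh (x := N), cosh_add_sinh (2 : ℝ)]
  obtain ⟨t, ht, hft⟩ := exists_mem_Ioo_eq_zero_of_hasDerivAt_neg (by fun_prop) (by simp [f]) hd
    (by linarith) one_pos hf1
  exact ⟨t, ht.1, sub_eq_zero.mp hft⟩

theorem two_mul_cosh_two_mul_sub_two_mul_cosh_eq_of_sinh_eq {N c t : ℝ}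
    (h : sinh ((N + 2) * t) = (1 + c) * sinh (N * t)) :
    (2 * cosh (2 * t) - 2) * cosh ((N + 1) * t) =
      c * (cosh ((N + 1) * t) - cosh ((N - 1) * t)) := by
  set u := (N + 1) * t
  rw [show (N + 2) * t = u + t by ring, show N * t = u - t by ring] at h
  rw [sinh_add, sinh_sub] at h
  rw [show (N - 1) * t = u - t - t by ring, show 2 * t = t + t by ring, cosh_add, cosh_sub,
    cosh_sub, sinh_sub]
  linear_combination (2 * sinh t) * h + (2 + c) * cosh u * cosh_sq t

noncomputable def coshProfile (s m x : ℝ) : ℝ := cosh (s * m) - cosh (s * (x - m))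

section coshProfile

variable (s m : ℝ)

theorem coshProfile_zero : coshProfile s m 0 = 0 := by
  simp [coshProfile]

theorem coshProfile_two_mul_sub (x : ℝ) : coshProfile s m (2 * m - x) = coshProfile s m x := by
  rw [coshProfile, coshProfile, ← cosh_neg (s * (x - m))]
  ring_nf

theorem coshProfile_two_mul : coshProfile s m (2 * m) = 0 := by
  simpa [coshProfile_zero] using coshProfile_two_mul_sub s m 0

theorem coshProfile_pos {s m x : ℝ} (hs : 0 < s) (hx : 0 < x) (hxm : x < 2 * m) :
    0 < coshProfile s m x := by
  rw [coshProfile, sub_pos, cosh_lt_cosh, abs_mul, abs_mul, abs_of_pos hs]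
  gcongr
  rw [abs_lt, abs_of_pos (by linarith)]
  constructor <;> linarith

theorem two_mul_cosh_mul_coshProfile (x : ℝ) :
    2 * cosh s * coshProfile s m x =
      coshProfile s m (x - 1) + coshProfile s m (x + 1) + (2 * cosh s - 2) * cosh (s * m) := by
  simp only [coshProfile]
  rw [show s * (x - 1 - m) = s * (x - m) - s by ring,
    show s * (x + 1 - m) = s * (x - m) + s by ring, cosh_sub, cosh_add]
  ring

end coshProfile

theorem stmt_6 (n : ℕ) (hn : 3 ≤ n) (a : ℝ) (ha : 0 < a) :
    ∃ lam : ℝ, 0 < lam ∧ ∃ α : ℕ → ℝ,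
      α 0 = 0 ∧ α (n + 1) = 0 ∧ α 1 = 1 ∧ α n = 1 ∧
      (∀ j : ℕ, 1 < j → j < n → 0 < α j) ∧
      (∀ j : ℕ, 1 ≤ j → j ≤ n →
        lam * α j = α (j - 1) + α (j + 1) + 2 / ((n : ℝ) - 1 + 1 / Real.cosh a)) := by
  have hn3 : (3 : ℝ) ≤ n := by exact_mod_cast hn
  have hsech : 0 < 1 / cosh a ∧ 1 / cosh a < 1 :=
    ⟨by positivity, (div_lt_one (cosh_pos a)).mpr (one_lt_cosh.mpr ha.ne')⟩
  set c := 2 / ((n : ℝ) - 1 + 1 / cosh a)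
  have hcN : 2 < c * n := by
    rw [div_mul_eq_mul_div, lt_div_iff₀ (by linarith)]
    linarith
  have hc : c < 1 := (div_lt_one (by linarith)).mpr (by linarith)
  obtain ⟨t, ht, hsinh⟩ := exists_pos_sinh_mul_add_two_eq (by positivity) hcN hc
  set m : ℝ := (n + 1) / 2
  have h2m : 2 * m = n + 1 := by ring
  set β := coshProfile (2 * t) m
  have hβ1 : 0 < β 1 := coshProfile_pos (by positivity) one_pos (by linarith)
  have hconst : (2 * cosh (2 * t) - 2) * cosh (2 * t * m) = c * β 1 := by
    have h := two_mul_cosh_two_mul_sub_two_mul_cosh_eq_of_sinh_eq hsinh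
    simp only [β, coshProfile]
    rw [show 2 * t * m = (n + 1) * t by ring, show 2 * t * (1 - m) = -((n - 1) * t) by ring,
      cosh_neg]
    exact h
  refine ⟨2 * cosh (2 * t), by positivity, fun j ↦ β j / β 1, ?_, ?_, ?_, ?_, ?_, ?_⟩ <;>
    dsimp only
  · simp [β, coshProfile_zero]
  · rw [show ((n + 1 : ℕ) : ℝ) = 2 * m by push_cast; rw [h2m]]
    simp [β, coshProfile_two_mul]
  · simpa using div_self hβ1.ne'
  · rw [show (n : ℝ) = 2 * m - 1 by rw [h2m]; ring]
    simp only [β, coshProfile_two_mul_sub, div_self hβ1.ne']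
  · intro j hj hjn
    have hj' : (1 : ℝ) < j := by exact_mod_cast hj
    have hjn' : (j : ℝ) < n := by exact_mod_cast hjn
    exact div_pos (coshProfile_pos (by positivity) (by linarith) (by linarith)) hβ1
  · intro j hj _
    rw [Nat.cast_sub hj, Nat.cast_add, Nat.cast_one]
    field_simp
    linear_combination two_mul_cosh_mul_coshProfile (2 * t) m j + hconst
end

section
/- For n ≥ 3 a natural number and a > 0 real, define h : (0,∞) → ℝ by h(x) = (x^{(n−1)/2} + x^{−(n−1)/2})/(x^{(n+1)/2} + x^{−(n+1)/2}) and g : [1,∞) → ℝ by g(y) = h(y + √(y² − 1)) − 1 + (y − 1)(n − 1 + 1/cosh a). Then there exists y₀ > 1 with g(y₀) = 0. -/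
noncomputable def hfun (n : ℕ) (x : ℝ) : ℝ :=
  (x ^ (((n : ℝ) - 1) / 2) + x ^ (-(((n : ℝ) - 1) / 2))) /
    (x ^ (((n : ℝ) + 1) / 2) + x ^ (-(((n : ℝ) + 1) / 2)))

noncomputable def gfun (n : ℕ) (a y : ℝ) : ℝ :=
  hfun n (y + Real.sqrt (y ^ 2 - 1)) - 1 + (y - 1) * ((n : ℝ) - 1 + 1 / Real.cosh a)

/-!
Substituting `y = cosh u` turns `y + √(y² - 1)` into `exp u`, and then
`h(exp u) = cosh((n-1)u/2) / cosh((n+1)u/2)`. With `u = 2s` and `c = n - 1 + 1/cosh a`,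
`g(cosh 2s) = cosh(ns - s)/cosh(ns + s) - 1 + 2c sinh² s`, and
`cosh(ns + s) - cosh(ns - s) = 2 sinh(ns) sinh s ≥ 2n sinh² s`, so `g < 0` for small `s > 0`
as soon as `c < n`, which is where `a ≠ 0` enters. On the other hand `g(1 + 1/c) > 0` because
`h > 0`, and the intermediate value theorem gives the zero.
-/

open Real Set Filter Topology

theorem Real.nat_mul_sinh_le_sinh_nat_mul {x : ℝ} (hx : 0 ≤ x) (k : ℕ) :
    k * sinh x ≤ sinh (k * x) := by
  induction k with
  | zero => simp
  | succ k ih =>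
    have hsinh_kx : 0 ≤ sinh (k * x) := by positivity
    have hsinh_x : 0 ≤ sinh x := by positivity
    have := one_le_cosh x
    have := one_le_cosh (k * x)
    rw [Nat.cast_succ, add_one_mul, add_one_mul, sinh_add]
    nlinarith

theorem hfun_pos (n : ℕ) {x : ℝ} (hx : 0 < x) : 0 < hfun n x := by
  unfold hfun
  positivity

theorem hfun_exp (n : ℕ) (u : ℝ) :
    hfun n (exp u) = cosh (((n : ℝ) - 1) / 2 * u) / cosh (((n : ℝ) + 1) / 2 * u) := by
  unfold hfun
  simp only [← exp_mul, cosh_eq]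
  have : 0 < exp (((n : ℝ) + 1) / 2 * u) + exp (-(((n : ℝ) + 1) / 2 * u)) := by positivity
  field_simp

theorem gfun_eq_of_one_le (n : ℕ) (a : ℝ) {y : ℝ} (hy : 1 ≤ y) :
    gfun n a y = cosh (((n : ℝ) - 1) / 2 * arcosh y) / cosh (((n : ℝ) + 1) / 2 * arcosh y) - 1
      + (y - 1) * ((n : ℝ) - 1 + 1 / cosh a) := by
  rw [gfun, ← exp_arcosh hy, hfun_exp]

theorem continuousOn_gfun (n : ℕ) (a : ℝ) : ContinuousOn (gfun n a) (Ici 1) := by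
  refine ContinuousOn.congr ?_ fun y hy => gfun_eq_of_one_le n a hy
  refine ContinuousOn.add (ContinuousOn.sub (ContinuousOn.div ?_ ?_ ?_) continuousOn_const) ?_
  · exact continuous_cosh.comp_continuousOn (continuousOn_const.mul continuousOn_arcosh)
  · exact continuous_cosh.comp_continuousOn (continuousOn_const.mul continuousOn_arcosh)
  · exact fun y _ => (cosh_pos _).ne'
  · fun_prop

theorem gfun_pos_of_one_le_mul {n : ℕ} {a y : ℝ} (hy : 1 ≤ y)
    (h : 1 ≤ (y - 1) * ((n : ℝ) - 1 + 1 / cosh a)) : 0 < gfun n a y := by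
  have := hfun_pos n (x := y + √(y ^ 2 - 1)) (by positivity)
  rw [gfun]
  linarith

theorem cosh_sub_div_cosh_add_add_two_mul_sinh_sq_mul_lt_one {A s c k : ℝ} (hs : 0 < s)
    (hA : k * sinh s ≤ sinh A) (hc : c * cosh (A + s) < k) :
    cosh (A - s) / cosh (A + s) + 2 * sinh s ^ 2 * c < 1 := by
  have hsinh : 0 < sinh s := sinh_pos_iff.mpr hs
  have hcosh := cosh_pos (A + s)
  have hdiff : cosh (A + s) - cosh (A - s) = 2 * sinh A * sinh s := by
    rw [cosh_add, cosh_sub]; ring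
  rw [div_add' _ _ _ hcosh.ne', div_lt_one hcosh]
  nlinarith [mul_lt_mul_of_pos_left hc (pow_pos hsinh 2), mul_le_mul_of_nonneg_right hA hsinh.le]

theorem exists_pos_mul_cosh_lt {c k : ℝ} (hck : c < k) (b : ℝ) :
    ∃ s > 0, c * cosh (b * s) < k := by
  have hcont : ContinuousAt (fun s => c * cosh (b * s)) 0 := by fun_prop
  have hnear : ∀ᶠ s in 𝓝 0, c * cosh (b * s) < k :=
    hcont.eventually_lt continuousAt_const (by simpa using hck)
  obtain ⟨s, hs, hpos⟩ :=
    ((hnear.filter_mono nhdsWithin_le_nhds).and (self_mem_nhdsWithin (s := Ioi 0))).exists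
  exact ⟨s, hpos, hs⟩

theorem exists_gfun_neg (n : ℕ) {a : ℝ} (ha : a ≠ 0) :
    ∃ y, 1 < y ∧ gfun n a y < 0 := by
  have hcn : (n : ℝ) - 1 + 1 / cosh a < n := by
    have : 1 / cosh a < 1 := (div_lt_one (cosh_pos a)).mpr (one_lt_cosh.mpr ha)
    linarith
  obtain ⟨s, hs, hsmall⟩ := exists_pos_mul_cosh_lt hcn ((n : ℝ) + 1)
  refine ⟨cosh (2 * s), one_lt_cosh.mpr (by positivity), ?_⟩
  have key := cosh_sub_div_cosh_add_add_two_mul_sinh_sq_mul_lt_one hs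
    (Real.nat_mul_sinh_le_sinh_nat_mul hs.le n) (by rwa [← add_one_mul])
  have hminus : ((n : ℝ) - 1) / 2 * (2 * s) = n * s - s := by ring
  have hplus : ((n : ℝ) + 1) / 2 * (2 * s) = n * s + s := by ring
  rw [gfun_eq_of_one_le n a (one_le_cosh _), arcosh_cosh (by positivity), hminus, hplus,
    cosh_two_mul, cosh_sq]
  linarith

theorem stmt_10 (n : ℕ) (hn : 3 ≤ n) (a : ℝ) (ha : 0 < a) :
    ∃ y₀ : ℝ, 1 < y₀ ∧ gfun n a y₀ = 0 := by
  set c := (n : ℝ) - 1 + 1 / cosh a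
  have hc : 0 < c := by
    have : (3 : ℝ) ≤ n := by exact_mod_cast hn
    have : 0 < 1 / cosh a := by positivity
    linarith
  obtain ⟨y₁, hy₁, hneg⟩ := exists_gfun_neg n ha.ne'
  have hy₂ : 1 < 1 + 1 / c := by simp [hc]
  have hpos : 0 < gfun n a (1 + 1 / c) :=
    gfun_pos_of_one_le_mul hy₂.le (by rw [add_sub_cancel_left, one_div_mul_cancel hc.ne'])
  have hone : 1 < min y₁ (1 + 1 / c) := lt_min hy₁ hy₂
  obtain ⟨y₀, hy₀, hzero⟩ := intermediate_value_uIcc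
    ((continuousOn_gfun n a).mono fun y hy => hone.le.trans hy.1) (mem_uIcc_of_le hneg.le hpos.le)
  exact ⟨y₀, hone.trans_le hy₀.1, hzero⟩
end

section
/- For every x > 1 and natural number n ≥ 1, the derivative of h(x) = (x^{(n−1)/2} + x^{−(n−1)/2})/(x^{(n+1)/2} + x^{−(n+1)/2}) satisfies h'(x) = (x − x⁻¹)·(−(∑_{j=1}^{n} x^{n−2j}) − n·x⁻¹)/(x^{(n+1)/2} + x^{−(n+1)/2})²; in particular h'(x) < 0 for x > 1. -/
open Finset Real

lemma hasDerivAt_rpow_add_rpow_neg (a : ℝ) {x : ℝ} (hx : 0 < x) :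
    HasDerivAt (fun y : ℝ => y ^ a + y ^ (-a)) (a * (x ^ a - (x ^ a)⁻¹) / x) x := by
  refine ((hasDerivAt_rpow_const (p := a) (Or.inl hx.ne')).add
    (hasDerivAt_rpow_const (p := -a) (Or.inl hx.ne'))).congr_deriv ?_
  rw [rpow_sub_one hx.ne', rpow_sub_one hx.ne', rpow_neg hx.le]
  ring

lemma sub_inv_mul_rpow {x : ℝ} (hx : 0 < x) (m : ℝ) :
    (x - x⁻¹) * x ^ m = x ^ (m + 1) - x ^ (m - 1) := by
  rw [rpow_add_one hx.ne', rpow_sub_one hx.ne']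
  ring

lemma sub_inv_mul_sum_Icc_rpow (n : ℕ) {x : ℝ} (hx : 0 < x) :
    (x - x⁻¹) * ∑ j ∈ Icc 1 n, x ^ ((n : ℝ) - 2 * j) = (x ^ (n : ℝ) - (x ^ (n : ℝ))⁻¹) / x := by
  have hterm : ∀ j : ℕ, (x - x⁻¹) * x ^ ((n : ℝ) - 2 * j) =
      -x ^ ((n : ℝ) - 2 * ↑(j + 1) + 1) - -x ^ ((n : ℝ) - 2 * j + 1) := by
    intro j
    rw [sub_inv_mul_rpow hx]
    push_cast
    ring_nf
  rw [mul_sum, ← Ico_add_one_right_eq_Icc, sum_congr rfl fun j _ => hterm j,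
    sum_Ico_sub (fun j : ℕ => -x ^ ((n : ℝ) - 2 * j + 1)) (by omega), ← rpow_neg hx.le, sub_div,
    ← rpow_sub_one hx.ne', ← rpow_sub_one hx.ne']
  push_cast
  ring_nf

lemma hasDerivAt_hfun (n : ℕ) {x : ℝ} (hx : 0 < x) :
    HasDerivAt (hfun n)
      ((x - x⁻¹) * (-(∑ j ∈ Icc 1 n, x ^ ((n : ℝ) - 2 * (j : ℝ))) - (n : ℝ) * x⁻¹) /
        (x ^ (((n : ℝ) + 1) / 2) + x ^ (-(((n : ℝ) + 1) / 2))) ^ 2) x := by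
  have hb : x ^ (((n : ℝ) + 1) / 2) = x ^ (((n : ℝ) - 1) / 2) * x := by
    rw [← rpow_add_one hx.ne']; ring_nf
  have hxn : x ^ (n : ℝ) = x ^ (((n : ℝ) - 1) / 2) * x ^ (((n : ℝ) + 1) / 2) := by
    rw [← rpow_add hx]; ring_nf
  have hnum : (x - x⁻¹) * (-(∑ j ∈ Icc 1 n, x ^ ((n : ℝ) - 2 * (j : ℝ))) - (n : ℝ) * x⁻¹) =
      -((x ^ (n : ℝ) - (x ^ (n : ℝ))⁻¹) / x) - n * ((x - x⁻¹) * x⁻¹) := by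
    rw [← sub_inv_mul_sum_Icc_rpow n hx]; ring
  refine ((hasDerivAt_rpow_add_rpow_neg _ hx).div (hasDerivAt_rpow_add_rpow_neg _ hx)
    (by positivity)).congr_deriv ?_
  have hu := (rpow_pos_of_pos hx (((n : ℝ) - 1) / 2)).ne'
  rw [hnum, hxn, rpow_neg hx.le, rpow_neg hx.le, hb]
  congr 1
  field_simp
  ring

lemma hfun_deriv_neg {n : ℕ} (hn : 1 ≤ n) {x : ℝ} (hx : 1 < x) :
    (x - x⁻¹) * (-(∑ j ∈ Icc 1 n, x ^ ((n : ℝ) - 2 * (j : ℝ))) - (n : ℝ) * x⁻¹) /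
        (x ^ (((n : ℝ) + 1) / 2) + x ^ (-(((n : ℝ) + 1) / 2))) ^ 2 < 0 := by
  have hx0 : 0 < x := one_pos.trans hx
  have hsub : 0 < x - x⁻¹ := sub_pos.2 ((inv_lt_one_of_one_lt₀ hx).trans hx)
  have hsum : 0 ≤ ∑ j ∈ Icc 1 n, x ^ ((n : ℝ) - 2 * (j : ℝ)) :=
    sum_nonneg fun j _ => (rpow_pos_of_pos hx0 _).le
  have hnx : 0 < (n : ℝ) * x⁻¹ := by positivity
  exact div_neg_of_neg_of_pos (mul_neg_of_pos_of_neg hsub (by linarith)) (by positivity)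

theorem stmt_13 (n : ℕ) (hn : 1 ≤ n) (x : ℝ) (hx : 1 < x) :
    HasDerivAt (hfun n)
      ((x - x⁻¹) * (-(∑ j ∈ Finset.Icc 1 n, x ^ ((n : ℝ) - 2 * (j : ℝ))) - (n : ℝ) * x⁻¹) /
        (x ^ (((n : ℝ) + 1) / 2) + x ^ (-(((n : ℝ) + 1) / 2))) ^ 2) x ∧
    (x - x⁻¹) * (-(∑ j ∈ Finset.Icc 1 n, x ^ ((n : ℝ) - 2 * (j : ℝ))) - (n : ℝ) * x⁻¹) /
        (x ^ (((n : ℝ) + 1) / 2) + x ^ (-(((n : ℝ) + 1) / 2))) ^ 2 < 0 :=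
  ⟨hasDerivAt_hfun n (one_pos.trans hx), hfun_deriv_neg hn hx⟩
end

section
/- In the hyperbolic plane ℍ², for a regular triangle (all three pairwise distances equal to a > 0) with vertices V₀, V₁, V₂ and circumcenter C (the unique point equidistant from all vertices), the squared hyperbolic cosine of the distance from each vertex to C equals (2·cosh a + 1)/3. -/
/-- Inverse hyperbolic cosine. -/
noncomputable def arcosh (x : ℝ) : ℝ :=
  Real.log (x + Real.sqrt (x ^ 2 - 1))

/-- The Minkowski bilinear form on ℝ^{n+1}: signature (-,+,…,+). -/
def mink (n : ℕ) (x y : Fin (n + 1) → ℝ) : ℝ :=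
  (∑ i : Fin n, x i.succ * y i.succ) - x 0 * y 0

/-- The hyperboloid model of n-dimensional hyperbolic space. -/
def Hyperboloid (n : ℕ) : Type :=
  {x : Fin (n + 1) → ℝ // mink n x x = -1 ∧ 0 < x 0}

/-- Hyperbolic distance in the hyperboloid model. -/
noncomputable def hdist {n : ℕ} (X Y : Hyperboloid n) : ℝ :=
  arcosh (-(mink n X.1 Y.1))

/-! In the hyperboloid model `cosh d(X, Y) = -⟪X, Y⟫` for the Minkowski form, so the Gram matrix
of the vertices of a regular simplex in `ℍⁿ ⊂ ℝⁿ⁺¹` and its circumcentre is known up to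
`cosh R`. These `n + 2` vectors are linearly dependent, and that Gram matrix is singular exactly
when `(n + 1) cosh² R = n cosh a + 1`. -/

lemma arcosh_eq_real_arcosh : arcosh = Real.arcosh := rfl

section Minkowski

variable {n : ℕ}

lemma mink_comm (x y : Fin (n + 1) → ℝ) : mink n x y = mink n y x := by
  simp only [mink, mul_comm]

lemma mink_sum_smul_right {ι : Type*} (s : Finset ι) (x : Fin (n + 1) → ℝ) (g : ι → ℝ)
    (v : ι → Fin (n + 1) → ℝ) :
    mink n x (∑ i ∈ s, g i • v i) = ∑ i ∈ s, g i * mink n x (v i) := by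
  simp only [mink, Finset.sum_apply, Pi.smul_apply, smul_eq_mul, mul_sub, Finset.mul_sum,
    Finset.sum_sub_distrib]
  rw [Finset.sum_comm]
  congr 1
  · exact Finset.sum_congr rfl fun _ _ => Finset.sum_congr rfl fun _ _ => by ring
  · exact Finset.sum_congr rfl fun _ _ => by ring

lemma mink_zero_right (x : Fin (n + 1) → ℝ) : mink n x 0 = 0 := by
  simp [mink]

lemma exists_ne_zero_forall_sum_mul_mink_eq_zero {ι : Type*} [Fintype ι]
    (hι : n + 1 < Fintype.card ι) (v : ι → Fin (n + 1) → ℝ) :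
    ∃ g : ι → ℝ, g ≠ 0 ∧ ∀ x, ∑ i, g i * mink n x (v i) = 0 := by
  have hdep : ¬ LinearIndependent ℝ v := fun h => by
    have := h.fintype_card_le_finrank
    rw [Module.finrank_fin_fun] at this
    omega
  obtain ⟨g, hg, i, hi⟩ := Fintype.not_linearIndependent_iff.mp hdep
  refine ⟨g, fun h => hi (by simp [h]), fun x => ?_⟩
  rw [← mink_sum_smul_right, hg, mink_zero_right]

end Minkowski

namespace Hyperboloid

variable {n : ℕ}

/-- Reverse Cauchy–Schwarz: with `s` the spatial part of `⟪x, y⟫`, Cauchy–Schwarz gives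
`s² ≤ (x₀² - 1)(y₀² - 1)`, and `(x₀y₀ - 1)² - (x₀² - 1)(y₀² - 1) = (x₀ - y₀)²`. -/
lemma one_le_neg_mink (X Y : Hyperboloid n) : 1 ≤ -mink n X.1 Y.1 := by
  obtain ⟨x, hx, hx0⟩ := X
  obtain ⟨y, hy, hy0⟩ := Y
  simp only [mink] at hx hy ⊢
  have hcs := Finset.sum_mul_sq_le_sq_mul_sq Finset.univ (fun i : Fin n => x i.succ)
    (fun i => y i.succ)
  simp only [sq] at hcs
  have hp : 0 ≤ ∑ i : Fin n, x i.succ * x i.succ :=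
    Finset.sum_nonneg fun _ _ => mul_self_nonneg _
  have hq : 0 ≤ ∑ i : Fin n, y i.succ * y i.succ :=
    Finset.sum_nonneg fun _ _ => mul_self_nonneg _
  have hx1 : 1 ≤ x 0 := by nlinarith
  have hy1 : 1 ≤ y 0 := by nlinarith
  nlinarith [sq_nonneg (x 0 - y 0), mul_le_mul hx1 hy1 zero_le_one (by linarith)]

lemma mink_eq_neg_cosh_hdist (X Y : Hyperboloid n) :
    mink n X.1 Y.1 = -Real.cosh (hdist X Y) := by
  rw [hdist, arcosh_eq_real_arcosh, Real.cosh_arcosh (one_le_neg_mink X Y), neg_neg]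

lemma hdist_comm (X Y : Hyperboloid n) : hdist X Y = hdist Y X := by
  rw [hdist, hdist, mink_comm]

/-- Pairing a linear relation `c • C + ∑ γᵢ • Vᵢ = 0` with each `Vⱼ` and with `C` shows that all
`γⱼ` are equal, to `γ` say, that `c = -(n + 1) t γ`, and then that `γ ((n + 1) t² - n k - 1) = 0`. -/
theorem add_one_mul_sq_eq_of_mink_regular_simplex {k t : ℝ} (hk : k ≠ 1)
    (V : Fin (n + 1) → Hyperboloid n) (C : Hyperboloid n)
    (hV : Pairwise fun i j => mink n (V i).1 (V j).1 = -k) (hC : ∀ i, mink n C.1 (V i).1 = -t) :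
    (n + 1) * t ^ 2 = n * k + 1 := by
  obtain ⟨g, hg0, hg⟩ := exists_ne_zero_forall_sum_mul_mink_eq_zero (ι := Option (Fin (n + 1)))
    (by simp) fun o => o.elim C.1 fun i => (V i).1
  set c := g none
  set S := ∑ i, g (some i)
  have pair (x : Fin (n + 1) → ℝ) :
      c * mink n x C.1 + ∑ i, g (some i) * mink n x (V i).1 = 0 := by
    simpa [Fintype.sum_option] using hg x
  have gram (i j : Fin (n + 1)) :
      mink n (V j).1 (V i).1 = -k + (k - 1) * if i = j then 1 else 0 := by
    by_cases hij : i = j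
    · subst hij; simp [(V i).2.1]; ring
    · simp [hij, hV (Ne.symm hij)]
  have row (j : Fin (n + 1)) : (k - 1) * g (some j) = k * S + t * c := by
    have h := pair (V j).1
    simp only [gram, mul_add, mul_ite, mul_one, mul_zero, Finset.sum_add_distrib,
      Finset.sum_ite_eq', Finset.mem_univ, if_true, ← Finset.sum_mul] at h
    rw [mink_comm, hC] at h
    linear_combination h
  have rowC : c = -t * S := by
    have h := pair C.1
    simp only [C.2.1, hC, ← Finset.sum_mul] at h
    linear_combination -h
  have hk1 : k - 1 ≠ 0 := sub_ne_zero.mpr hk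
  obtain ⟨γ, hγ⟩ : ∃ γ, ∀ j, g (some j) = γ :=
    ⟨(k * S + t * c) / (k - 1), fun j => by rw [eq_div_iff hk1, mul_comm, row]⟩
  have hS : S = (n + 1) * γ := by simp [S, hγ]
  have hγ0 : γ ≠ 0 := by
    intro h
    apply hg0
    funext o
    cases o with
    | none => simp [c, rowC, hS, h]
    | some j => simp [hγ, h]
  have key : γ * ((n + 1) * t ^ 2 - n * k - 1) = 0 := by
    linear_combination row 0 - (k - 1) * hγ 0 + t * rowC + (k - t ^ 2) * hS
  linear_combination (mul_eq_zero.mp key).resolve_left hγ0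

theorem cosh_sq_circumradius_of_regular_simplex {a r : ℝ} (ha : a ≠ 0)
    (V : Fin (n + 1) → Hyperboloid n) (C : Hyperboloid n)
    (hV : Pairwise fun i j => hdist (V i) (V j) = a) (hC : ∀ i, hdist C (V i) = r) :
    Real.cosh r ^ 2 = (n * Real.cosh a + 1) / (n + 1) := by
  have key := add_one_mul_sq_eq_of_mink_regular_simplex (k := Real.cosh a) (t := Real.cosh r)
    (Real.one_lt_cosh.mpr ha).ne' V C
    (fun i j hij => by simp only [mink_eq_neg_cosh_hdist, hV hij])
    (fun i => by simp only [mink_eq_neg_cosh_hdist, hC i])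
  rw [eq_div_iff (by positivity)]
  linarith

end Hyperboloid

theorem stmt_14 (a : ℝ) (ha : 0 < a) (V₀ V₁ V₂ C : Hyperboloid 2)
    (h01 : hdist V₀ V₁ = a) (h02 : hdist V₀ V₂ = a) (h12 : hdist V₁ V₂ = a)
    (hC0 : hdist C V₀ = hdist C V₁) (hC1 : hdist C V₁ = hdist C V₂) :
    Real.cosh (hdist V₀ C) ^ 2 = (2 * Real.cosh a + 1) / 3 ∧
    Real.cosh (hdist V₁ C) ^ 2 = (2 * Real.cosh a + 1) / 3 ∧
    Real.cosh (hdist V₂ C) ^ 2 = (2 * Real.cosh a + 1) / 3 := by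
  have hV : Pairwise fun i j => hdist (![V₀, V₁, V₂] i) (![V₀, V₁, V₂] j) = a := by
    intro i j hij
    fin_cases i <;> fin_cases j <;> simp_all [Hyperboloid.hdist_comm V₁ V₀,
      Hyperboloid.hdist_comm V₂ V₀, Hyperboloid.hdist_comm V₂ V₁]
  have hC (i : Fin 3) : hdist C (![V₀, V₁, V₂] i) = hdist C V₀ := by
    fin_cases i <;> simp [hC0, hC1]
  have key := Hyperboloid.cosh_sq_circumradius_of_regular_simplex ha.ne' _ C hV hC
  norm_num at key
  simp only [Hyperboloid.hdist_comm _ C, ← hC0, ← hC1, key, and_self]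
end
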